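/- For y ~ N(μ, B), E[ s(y) (α(y − μ)² − B) ] = −V^α B / (α + 1)^{3/2}. -/

import Mathlib

open MeasureTheory Real

lemma integrable_sq_mul_exp_neg_mul_sq {b : ℝ} (hb : 0 < b) :
    Integrable fun x : ℝ => x ^ 2 * Real.exp (-b * x ^ 2) := by
  have := integrable_rpow_mul_exp_neg_mul_sq hb (s := 2) (by norm_num)
  simpa [Real.rpow_two] using this

lemma integral_sq_mul_exp_neg_mul_sq {b : ℝ} (hb : 0 < b) :
    ∫ x : ℝ, x ^ 2 * Real.exp (-b * x ^ 2) = Real.sqrt (π / b) / (2 * b) := by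
  have hderiv : ∀ x : ℝ, HasDerivAt (fun x : ℝ => x * Real.exp (-b * x ^ 2))
      (Real.exp (-b * x ^ 2) - 2 * b * (x ^ 2 * Real.exp (-b * x ^ 2))) x := by
    intro x
    have h1 : HasDerivAt (fun x : ℝ => -b * x ^ 2) (-b * (2 * x)) x := by
      simpa using ((hasDerivAt_pow 2 x).const_mul (-b))
    have := (hasDerivAt_id x).mul h1.exp
    refine this.congr_deriv ?_
    simp only [id]
    ring
  have hint : Integrable fun x : ℝ =>
      Real.exp (-b * x ^ 2) - 2 * b * (x ^ 2 * Real.exp (-b * x ^ 2)) :=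
    (integrable_exp_neg_mul_sq hb).sub ((integrable_sq_mul_exp_neg_mul_sq hb).const_mul _)
  have h0 := integral_eq_zero_of_hasDerivAt_of_integrable hderiv hint
    (integrable_mul_exp_neg_mul_sq hb)
  rw [integral_sub (integrable_exp_neg_mul_sq hb)
      ((integrable_sq_mul_exp_neg_mul_sq hb).const_mul _),
    integral_const_mul, integral_gaussian, sub_eq_zero] at h0
  rw [eq_div_iff (by positivity : (2*b) ≠ 0)]
  linarith [h0]

/-- For `y ~ N(μ, B)`: `E[s(y)(α(y − μ)² − B)] = −V^α B/(α+1)^{3/2}`. -/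
theorem second_derivative_expectation
    (μ B α : ℝ) (hB : 0 < B) (hα : 0 < α)
    (V : ℝ) (hV : V = (2 * π * B) ^ (-(1/2) : ℝ))
    (f s : ℝ → ℝ)
    (hf : ∀ y, f y = V * Real.exp (-(y - μ) ^ 2 / (2 * B)))
    (hs : ∀ y, s y = V ^ α * Real.exp (-α * (y - μ) ^ 2 / (2 * B))) :
    ∫ y : ℝ, f y * (s y * (α * (y - μ) ^ 2 - B))
      = -(V ^ α) * B / (α + 1) ^ ((3 : ℝ)/2) := by
  set P : ℝ := 2 * π * B with hP
  have hPpos : 0 < P := by positivity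
  set A : ℝ := α + 1 with hA
  have hApos : 0 < A := by positivity
  set c : ℝ := A / (2 * B) with hc
  have hcpos : 0 < c := by positivity
  set C : ℝ := V * V ^ α with hC
  -- rewrite the integrand
  have key : ∀ y : ℝ, f y * (s y * (α * (y - μ) ^ 2 - B))
      = C * (α * ((y - μ) ^ 2 * Real.exp (-c * (y - μ) ^ 2))
          - B * Real.exp (-c * (y - μ) ^ 2)) := by
    intro y
    have hexp : Real.exp (-(y - μ) ^ 2 / (2 * B)) * Real.exp (-α * (y - μ) ^ 2 / (2 * B))
        = Real.exp (-c * (y - μ) ^ 2) := by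
      rw [← Real.exp_add]
      congr 1
      rw [hc, hA]
      ring
    rw [hf, hs, hC]
    calc V * Real.exp (-(y - μ) ^ 2 / (2 * B)) *
          (V ^ α * Real.exp (-α * (y - μ) ^ 2 / (2 * B)) * (α * (y - μ) ^ 2 - B))
        = V * V ^ α * ((Real.exp (-(y - μ) ^ 2 / (2 * B)) *
            Real.exp (-α * (y - μ) ^ 2 / (2 * B))) * (α * (y - μ) ^ 2 - B)) := by ring
      _ = V * V ^ α * (Real.exp (-c * (y - μ) ^ 2) * (α * (y - μ) ^ 2 - B)) := by rw [hexp]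
      _ = _ := by ring
  simp_rw [key]
  have hshift : ∫ y : ℝ, C * (α * ((y - μ) ^ 2 * Real.exp (-c * (y - μ) ^ 2))
        - B * Real.exp (-c * (y - μ) ^ 2))
      = ∫ x : ℝ, C * (α * (x ^ 2 * Real.exp (-c * x ^ 2))
        - B * Real.exp (-c * x ^ 2)) := by
    exact integral_sub_right_eq_self
      (fun x => C * (α * (x ^ 2 * Real.exp (-c * x ^ 2)) - B * Real.exp (-c * x ^ 2))) μ
  rw [hshift, integral_const_mul,
    integral_sub ((integrable_sq_mul_exp_neg_mul_sq hcpos).const_mul α)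
      ((integrable_exp_neg_mul_sq hcpos).const_mul B),
    integral_const_mul, integral_const_mul, integral_sq_mul_exp_neg_mul_sq hcpos,
    integral_gaussian]
  -- now pure algebra with rpow
  have hsq : Real.sqrt (π / c) = P ^ ((1:ℝ)/2) / A ^ ((1:ℝ)/2) := by
    have : π / c = P / A := by
      rw [hc, hP]
      field_simp
    rw [this, Real.sqrt_eq_rpow, Real.div_rpow hPpos.le hApos.le]
  have hVpow : V ^ α = P ^ (-(α/2)) := by
    rw [hV, ← Real.rpow_mul hPpos.le]
    congr 1
    ring
  have hC' : C = P ^ (-(1+α)/2) := by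
    rw [hC, hVpow, hV, ← Real.rpow_add hPpos]
    congr 1
    ring
  have h2c : 2 * c = A / B := by
    rw [hc]
    field_simp
  have hA32 : A ^ ((3:ℝ)/2) = A ^ ((1:ℝ)/2) * A := by
    rw [show (3:ℝ)/2 = 1/2 + 1 by norm_num, Real.rpow_add hApos, Real.rpow_one]
  have hPP : P ^ (-(1+α)/2) * P ^ ((1:ℝ)/2) = P ^ (-(α/2)) := by
    rw [← Real.rpow_add hPpos]
    congr 1
    ring
  have hAe : α = A - 1 := by rw [hA]; ring
  rw [hC', hVpow, hsq, h2c, hA32, ← hPP]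
  have hZ : (0:ℝ) < A ^ ((1:ℝ)/2) := by positivity
  field_simp
  rw [hAe]
  ring
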